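/- Let u : ℝ × [0,T] → ℝ be a bounded continuous function which is a weak solution of the Hunter–Saxton equation, and let {x_α}_{α ∈ A} be a nonempty family of characteristics associated to u (C¹ functions on [0,T] with ẋ_α(t) = u(x_α(t),t)) with a common starting point. Then the function y(t) := sup_α x_α(t) is also a characteristic associated to u, i.e. y is C¹ and ẏ(t) = u(y(t),t) for all t ∈ [0,T]. The same holds for t ↦ inf_α x_α(t). -/

import Mathlib

open MeasureTheory Set Filter Topology

noncomputable section

namespace HunterSaxton

/-- The source term `F(x,t) = ½ ∫_{-∞}^x w(y,t)² dy` of the Hunter–Saxton equation. -/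
def source (w : ℝ → ℝ → ℝ) (x t : ℝ) : ℝ := (1/2) * ∫ y in Set.Iio x, (w y t)^2

/-- `t ↦ u(·,t)` is absolutely continuous as a map into `L²_loc(ℝ)`:
for every spatial window `[a,b]` and every time horizon `T`, the map
`t ↦ u(·,t)|_{[a,b]}` is absolutely continuous on `[0,T]` with respect to the `L²([a,b])`
distance. -/
def TimeL2locAC (u : ℝ → ℝ → ℝ) : Prop :=
  ∀ a b T : ℝ, 0 ≤ T → ∀ ε > 0, ∃ δ > 0, ∀ (n : ℕ) (I : Fin n → ℝ × ℝ),
    (∀ i, 0 ≤ (I i).1 ∧ (I i).1 ≤ (I i).2 ∧ (I i).2 ≤ T) →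
    (∀ i j, i ≠ j → Disjoint (Set.Ioo (I i).1 (I i).2) (Set.Ioo (I j).1 (I j).2)) →
    (∑ i, ((I i).2 - (I i).1)) < δ →
    (∑ i, (∫ x in a..b, (u x (I i).2 - u x (I i).1)^2) ^ (1/2 : ℝ)) < ε

/-- A weak solution `u` (with `w = ∂ₓu`) of the Hunter–Saxton equation on `ℝ × [0,∞)`
with initial data `u₀` (absolutely continuous, `u₀' = w₀` a.e., `w₀ ∈ L²(ℝ)`). -/
structure IsWeakSolution (u w : ℝ → ℝ → ℝ) (u₀ w₀ : ℝ → ℝ) : Prop where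
  /-- `u` is continuous on `ℝ × [0,∞)`. -/
  cont : ContinuousOn (fun p : ℝ × ℝ => u p.1 p.2) (Set.univ ×ˢ Set.Ici (0:ℝ))
  /-- `u(·,0) = u₀`. -/
  init : ∀ x, u x 0 = u₀ x
  /-- `u₀` is absolutely continuous with derivative `w₀` a.e. -/
  init_ac : ∀ x y : ℝ, u₀ y - u₀ x = ∫ s in x..y, w₀ s
  /-- `w₀ ∈ L²(ℝ)`. -/
  init_l2 : MemLp w₀ 2 (volume : Measure ℝ)
  /-- for each `t ≥ 0`, `u(·,t)` is absolutely continuous with `∂ₓ u = w(·,t)` a.e. -/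
  space_ac : ∀ t, 0 ≤ t → ∀ x y : ℝ, u y t - u x t = ∫ s in x..y, w s t
  /-- `w(·,t) ∈ L²(ℝ)` for each `t ≥ 0`. -/
  w_sq_int : ∀ t, 0 ≤ t → Integrable (fun y => (w y t)^2) (volume : Measure ℝ)
  /-- `w ∈ L^∞([0,∞); L²(ℝ))`. -/
  energy_bdd : ∃ C : ℝ, ∀ t, 0 ≤ t → (∫ y, (w y t)^2) ≤ C
  /-- `t ↦ u(·,t) ∈ L²_loc(ℝ)` is absolutely continuous. -/
  time_ac : TimeL2locAC u
  /-- the equation `∂ₜu + ∂ₓ(u²/2) = ½∫_{-∞}^x w²` holds in the sense of distributions on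
  `ℝ × (0,∞)`. -/
  eqn : ∀ φ : ℝ → ℝ → ℝ, ContDiff ℝ (⊤ : ℕ∞) (Function.uncurry φ) →
    HasCompactSupport (Function.uncurry φ) → (∀ x t, t ≤ 0 → φ x t = 0) →
    (∫ t in Set.Ioi (0:ℝ), ∫ x : ℝ,
      (u x t * deriv (fun s => φ x s) t
        + (u x t)^2 / 2 * deriv (fun y => φ y t) x
        + source w x t * φ x t)) = 0

/-- The energy `E(t) = ½ ∫_ℝ w(y,t)² dy`. -/
def energy (w : ℝ → ℝ → ℝ) (t : ℝ) : ℝ := (1/2) * ∫ y, (w y t)^2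

/-- A dissipative solution: a weak solution whose derivative `∂ₓu = w` is bounded from above
on every compact subset of the (open) upper half-plane and such that `w(·,t) → w₀` in `L²(ℝ)`
as `t ↓ 0`. -/
structure IsDissipativeSolution (u w : ℝ → ℝ → ℝ) (u₀ w₀ : ℝ → ℝ)
    extends IsWeakSolution u w u₀ w₀ : Prop where
  deriv_upper_bdd : ∀ K : Set (ℝ × ℝ), IsCompact K → K ⊆ Set.univ ×ˢ Set.Ioi (0:ℝ) →
    ∃ C : ℝ, ∀ p ∈ K, w p.1 p.2 ≤ C
  init_conv : Tendsto (fun t => ∫ y, (w y t - w₀ y)^2) (𝓝[>] (0:ℝ)) (𝓝 0)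

/-- A characteristic associated to `u`: a `C¹` function with `ẋ(t) = u(x(t),t)` for `t ≥ 0`. -/
def IsCharacteristic (u : ℝ → ℝ → ℝ) (x : ℝ → ℝ) : Prop :=
  ∀ t ∈ Set.Ici (0:ℝ), HasDerivWithinAt x (u (x t) t) (Set.Ici 0) t

/-- A characteristic associated to `u` emanating from the point `ζ`. -/
def IsCharFrom (u : ℝ → ℝ → ℝ) (ζ : ℝ) (x : ℝ → ℝ) : Prop :=
  IsCharacteristic u x ∧ x 0 = ζ

/-- The leftmost characteristic emanating from `ζ`. -/
def IsLeftmostCharFrom (u : ℝ → ℝ → ℝ) (ζ : ℝ) (x : ℝ → ℝ) : Prop :=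
  IsCharFrom u ζ x ∧ ∀ y, IsCharFrom u ζ y → ∀ t, 0 ≤ t → x t ≤ y t

/-- The rightmost characteristic emanating from `ζ`. -/
def IsRightmostCharFrom (u : ℝ → ℝ → ℝ) (ζ : ℝ) (x : ℝ → ℝ) : Prop :=
  IsCharFrom u ζ x ∧ ∀ y, IsCharFrom u ζ y → ∀ t, 0 ≤ t → y t ≤ x t

/-- `I = {ζ : u₀'(ζ) exists and equals w₀(ζ)}`. -/
def Iset (u₀ w₀ : ℝ → ℝ) : Set ℝ := {ζ | HasDerivAt u₀ (w₀ ζ) ζ}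

/-- `I_t = {ζ ∈ I : w₀(ζ) > -2/t}` for finite `t > 0`. -/
def It (u₀ w₀ : ℝ → ℝ) (t : ℝ) : Set ℝ := {ζ ∈ Iset u₀ w₀ | -2 / t < w₀ ζ}

/-- `I_∞ = {ζ ∈ I : w₀(ζ) > 0}` (with the convention `-2/∞ = 0`). -/
def Iinf (u₀ w₀ : ℝ → ℝ) : Set ℝ := {ζ ∈ Iset u₀ w₀ | 0 < w₀ ζ}

/-- Forward uniqueness up to time `t` of characteristics emanating from `ζ`. -/
def UniqueForwardUpTo (u : ℝ → ℝ → ℝ) (ζ t : ℝ) : Prop :=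
  ∀ x y : ℝ → ℝ, IsCharFrom u ζ x → IsCharFrom u ζ y → ∀ s ∈ Set.Icc (0:ℝ) t, x s = y s

/-- No characteristic starting from a point `η ≠ ζ` meets a characteristic starting from `ζ`
on `(0,t]` (backward uniqueness up to time `t`). -/
def NoCrossUpTo (u : ℝ → ℝ → ℝ) (ζ t : ℝ) : Prop :=
  ∀ η : ℝ, η ≠ ζ → ∀ x y : ℝ → ℝ, IsCharFrom u ζ x → IsCharFrom u η y →
    ∀ s ∈ Set.Ioc (0:ℝ) t, x s ≠ y s

/-- `I_t^{unique}`: points of `I_t` whose characteristic is unique forwards and backwards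
up to time `t`. -/
def ItUnique (u : ℝ → ℝ → ℝ) (u₀ w₀ : ℝ → ℝ) (t : ℝ) : Set ℝ :=
  {ζ ∈ It u₀ w₀ t | UniqueForwardUpTo u ζ t ∧ NoCrossUpTo u ζ t}

/-- Forward uniqueness for all times. -/
def UniqueForwardAll (u : ℝ → ℝ → ℝ) (ζ : ℝ) : Prop :=
  ∀ x y : ℝ → ℝ, IsCharFrom u ζ x → IsCharFrom u ζ y → ∀ s, 0 ≤ s → x s = y s

/-- No crossing for all times. -/
def NoCrossAll (u : ℝ → ℝ → ℝ) (ζ : ℝ) : Prop :=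
  ∀ η : ℝ, η ≠ ζ → ∀ x y : ℝ → ℝ, IsCharFrom u ζ x → IsCharFrom u η y →
    ∀ s, 0 < s → x s ≠ y s

/-- `I_∞^{unique}`. -/
def IinfUnique (u : ℝ → ℝ → ℝ) (u₀ w₀ : ℝ → ℝ) : Set ℝ :=
  {ζ ∈ Iinf u₀ w₀ | UniqueForwardAll u ζ ∧ NoCrossAll u ζ}

/-- The time interval `[0,T_ζ)` where `T_ζ = ∞` if `w₀(ζ) ≥ 0` and `T_ζ = -2/w₀(ζ)` else. -/
def TcritSet (w₀ : ℝ → ℝ) (ζ : ℝ) : Set ℝ :=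
  if 0 ≤ w₀ ζ then Set.Ici 0 else Set.Ico 0 (-2 / w₀ ζ)

/-- `J = {ζ ∈ I : (x_ζ(s),s) ∈ Γ for a.e. s ∈ [0,T_ζ)}` where
`Γ = {(x,t) : ∂ₓu(x,t) exists}`. -/
def Jset (u : ℝ → ℝ → ℝ) (u₀ w₀ : ℝ → ℝ) : Set ℝ :=
  {ζ ∈ Iset u₀ w₀ | ∀ x : ℝ → ℝ, IsCharFrom u ζ x →
    ∀ᵐ s ∂(volume : Measure ℝ), s ∈ TcritSet w₀ ζ →
      DifferentiableAt ℝ (fun y => u y s) (x s)}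

/-- `J_t^{unique} = I_t^{unique} ∩ J`. -/
def JtUnique (u : ℝ → ℝ → ℝ) (u₀ w₀ : ℝ → ℝ) (t : ℝ) : Set ℝ :=
  ItUnique u u₀ w₀ t ∩ Jset u u₀ w₀

/-- The difference quotient `ω^{x₁,x₂}(s)` along two characteristics. -/
def omegaQ (u : ℝ → ℝ → ℝ) (x₁ x₂ : ℝ → ℝ) (s : ℝ) : ℝ :=
  (u (x₂ s) s - u (x₁ s) s) / (x₂ s - x₁ s)

/-- `J_T^{unique,N}` (relative to a time `τ < T`, a choice `Xc ζ` of the unique characteristic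
from each `ζ`, and the leftmost characteristics `Xl η`). -/
def JTuniqueN (u : ℝ → ℝ → ℝ) (u₀ w₀ : ℝ → ℝ) (Xc Xl : ℝ → ℝ → ℝ) (T τ : ℝ) (N : ℕ) :
    Set ℝ :=
  {ζ ∈ JtUnique u u₀ w₀ T | ∀ ε : ℝ, 0 < ε → ε ≤ 1 / (N : ℝ) →
    (∀ s ∈ Set.Icc (0:ℝ) τ, omegaQ u (Xc ζ) (Xl (ζ + ε)) s ≤ (N : ℝ)) ∧
    -2 / T ≤ (u₀ (ζ + ε) - u₀ ζ) / ε}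

/-- Mean value estimate: if `X' = g` on `[a,b]` and `|g - L| ≤ ε` there, then
`|X b - X a - (b-a)L| ≤ ε (b-a)`. -/
lemma aux_segment_est {X g : ℝ → ℝ} {a b L ε : ℝ} (hab : a ≤ b)
    (hd : ∀ σ ∈ Set.Icc a b, HasDerivWithinAt X (g σ) (Set.Icc a b) σ)
    (hb : ∀ σ ∈ Set.Icc a b, |g σ - L| ≤ ε) :
    |X b - X a - (b - a) * L| ≤ ε * (b - a) := by
  have hd' : ∀ σ ∈ Set.Icc a b,
      HasDerivWithinAt (fun σ => X σ - σ * L) (g σ - L) (Set.Icc a b) σ := by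
    intro σ hσ
    have := (hd σ hσ).sub ((hasDerivWithinAt_id σ _).mul_const L)
    simp only [one_mul] at this
    exact this
  have h := norm_image_sub_le_of_norm_deriv_le_segment' hd'
    (fun σ hσ => by
      rw [Real.norm_eq_abs]; exact hb σ (Set.Ico_subset_Icc_self hσ))
    b (Set.right_mem_Icc.2 hab)
  have heq : X b - b * L - (X a - a * L) = X b - X a - (b - a) * L := by ring
  rw [Real.norm_eq_abs] at h
  calc |X b - X a - (b - a) * L| = |X b - b * L - (X a - a * L)| := by rw [heq]
    _ ≤ ε * (b - a) := h

/-- Two-sided mean value estimate between times `s` and `t` in either order. -/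
lemma aux_est_two_sided {X g : ℝ → ℝ} {T s t L ε : ℝ}
    (hs : s ∈ Set.Icc (0:ℝ) T) (ht : t ∈ Set.Icc (0:ℝ) T)
    (hd : ∀ σ ∈ Set.Icc (0:ℝ) T, HasDerivWithinAt X (g σ) (Set.Icc 0 T) σ)
    (hb : ∀ σ ∈ Set.Icc (min s t) (max s t), |g σ - L| ≤ ε) :
    |X s - X t - (s - t) * L| ≤ ε * |s - t| := by
  rcases le_total t s with h | h
  · have hmin : min s t = t := min_eq_right h
    have hmax : max s t = s := max_eq_left h
    have hsub : Set.Icc t s ⊆ Set.Icc (0:ℝ) T := Set.Icc_subset_Icc ht.1 hs.2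
    have := aux_segment_est (a := t) (b := s) h
      (fun σ hσ => (hd σ (hsub hσ)).mono hsub)
      (fun σ hσ => hb σ (by rw [hmin, hmax]; exact hσ))
    rwa [abs_of_nonneg (by linarith : (0:ℝ) ≤ s - t)]
  · have hmin : min s t = s := min_eq_left h
    have hmax : max s t = t := max_eq_right h
    have hsub : Set.Icc s t ⊆ Set.Icc (0:ℝ) T := Set.Icc_subset_Icc hs.1 ht.2
    have h2 := aux_segment_est (a := s) (b := t) h
      (fun σ hσ => (hd σ (hsub hσ)).mono hsub)
      (fun σ hσ => hb σ (by rw [hmin, hmax]; exact hσ))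
    have heq : |X s - X t - (s - t) * L| = |X t - X s - (t - s) * L| := by
      rw [← abs_neg]; ring_nf
    rw [heq, abs_of_nonpos (by linarith : s - t ≤ 0)]
    linarith [h2]

/-- The supremum of a nonempty family of characteristics with common starting point is a
characteristic; only continuity and boundedness of `u` are used. -/
lemma aux_sup_is_char (u : ℝ → ℝ → ℝ) (T : ℝ) (hT : 0 < T)
    (hcont : ContinuousOn (fun p : ℝ × ℝ => u p.1 p.2) (Set.univ ×ˢ Set.Ici (0:ℝ)))
    (C : ℝ) (hbd : ∀ x : ℝ, ∀ t ∈ Set.Icc (0:ℝ) T, |u x t| ≤ C)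
    (A : Set ℝ) (hA : A.Nonempty) (X : ℝ → ℝ → ℝ) (x₀ : ℝ)
    (hchar : ∀ α ∈ A, ∀ t ∈ Set.Icc (0:ℝ) T,
      HasDerivWithinAt (X α) (u (X α t) t) (Set.Icc 0 T) t)
    (hstart : ∀ α ∈ A, X α 0 = x₀) :
    ∀ t ∈ Set.Icc (0:ℝ) T,
      HasDerivWithinAt (fun s => sSup ((fun α => X α s) '' A))
        (u (sSup ((fun α => X α t) '' A)) t) (Set.Icc 0 T) t := by
  have hC0 : 0 ≤ C := le_trans (abs_nonneg _) (hbd 0 0 ⟨le_refl 0, hT.le⟩)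
  -- uniform Lipschitz bound on each characteristic
  have hlip : ∀ α ∈ A, ∀ a ∈ Set.Icc (0:ℝ) T, ∀ b ∈ Set.Icc (0:ℝ) T,
      |X α b - X α a| ≤ C * |b - a| := by
    intro α hα a ha b hb
    have := aux_est_two_sided (s := b) (t := a) (L := 0) (ε := C) hb ha
      (hchar α hα)
      (fun σ hσ => by
        have hσT : σ ∈ Set.Icc (0:ℝ) T :=
          ⟨le_trans (le_min hb.1 ha.1) hσ.1, le_trans hσ.2 (max_le hb.2 ha.2)⟩
        simpa using hbd (X α σ) σ hσT)
    simpa using this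
  -- boundedness of the image sets
  have hbdd : ∀ s ∈ Set.Icc (0:ℝ) T, BddAbove ((fun α => X α s) '' A) := by
    intro s hs
    refine ⟨x₀ + C * T, ?_⟩
    rintro z ⟨α, hα, rfl⟩
    have h1 := hlip α hα 0 ⟨le_refl 0, hT.le⟩ s hs
    rw [hstart α hα, sub_zero, abs_of_nonneg hs.1] at h1
    have : C * s ≤ C * T := mul_le_mul_of_nonneg_left hs.2 hC0
    have := (abs_le.1 h1).2
    linarith
  have hne : ∀ s : ℝ, ((fun α => X α s) '' A).Nonempty := fun s => hA.image _
  intro t ht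
  set y : ℝ → ℝ := fun s => sSup ((fun α => X α s) '' A) with hy
  set L : ℝ := u (sSup ((fun α => X α t) '' A)) t with hL
  have hLC : |L| ≤ C := hbd _ t ht
  rw [hasDerivWithinAt_iff_tendsto_slope, Metric.tendsto_nhdsWithin_nhds]
  intro ε hε
  -- continuity of u at (y t, t)
  have hcw : ContinuousWithinAt (fun p : ℝ × ℝ => u p.1 p.2)
      (Set.univ ×ˢ Set.Ici (0:ℝ)) (y t, t) :=
    hcont (y t, t) (Set.mem_prod.2 ⟨Set.mem_univ _, ht.1⟩)
  rw [Metric.continuousWithinAt_iff] at hcw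
  obtain ⟨δ₁, hδ₁pos, hδ₁⟩ := hcw (ε / 2) (by positivity)
  set δ : ℝ := δ₁ / (2 * (2 * C + 1)) with hδdef
  have hδpos : 0 < δ := by positivity
  have hδeq : δ * (2 * (2 * C + 1)) = δ₁ := by
    rw [hδdef]; field_simp
  have hδle : δ ≤ δ₁ / 2 := by nlinarith
  -- main estimate
  have main : ∀ s ∈ Set.Icc (0:ℝ) T, |s - t| < δ →
      |y s - y t - (s - t) * L| ≤ (ε / 2) * |s - t| := by
    intro s hs hst
    have hstle : |s - t| ≤ δ := hst.le
    have hCst : 2 * (C * |s - t|) ≤ δ₁ / 2 := by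
      nlinarith [mul_le_mul_of_nonneg_left hstle hC0, abs_nonneg (s - t)]
    -- near characteristics track u(y t, t)
    have hnear : ∀ α ∈ A, y t - δ₁ / 2 ≤ X α t →
        |X α s - X α t - (s - t) * L| ≤ (ε / 2) * |s - t| := by
      intro α hα hclose
      refine aux_est_two_sided hs ht (hchar α hα) ?_
      intro σ hσ
      have hσT : σ ∈ Set.Icc (0:ℝ) T :=
        ⟨le_trans (le_min hs.1 ht.1) hσ.1, le_trans hσ.2 (max_le hs.2 ht.2)⟩
      have habs : |σ - t| ≤ |s - t| := by
        rcases le_total s t with h | h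
        · rw [min_eq_left h, max_eq_right h] at hσ
          rw [abs_of_nonpos (by linarith [hσ.2] : σ - t ≤ 0),
            abs_of_nonpos (by linarith : s - t ≤ 0)]
          linarith [hσ.1]
        · rw [min_eq_right h, max_eq_left h] at hσ
          rw [abs_of_nonneg (by linarith [hσ.1] : (0:ℝ) ≤ σ - t),
            abs_of_nonneg (by linarith : (0:ℝ) ≤ s - t)]
          linarith [hσ.2]
      have hXlip : |X α σ - X α t| ≤ C * |σ - t| := hlip α hα t ht σ hσT
      have hXt_le : X α t ≤ y t := le_csSup (hbdd t ht) ⟨α, hα, rfl⟩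
      have hXσ : |X α σ - y t| < δ₁ := by
        have h1 : |X α σ - y t| ≤ |X α σ - X α t| + |X α t - y t| := abs_sub_le _ _ _
        have h2 : |X α t - y t| ≤ δ₁ / 2 := by
          rw [abs_of_nonpos (by linarith)]; linarith
        have h3 : C * |σ - t| ≤ C * |s - t| := mul_le_mul_of_nonneg_left habs hC0
        linarith
      have hmemP : ((X α σ, σ) : ℝ × ℝ) ∈ Set.univ ×ˢ Set.Ici (0:ℝ) :=
        Set.mem_prod.2 ⟨Set.mem_univ _, hσT.1⟩
      have hdist : dist ((X α σ, σ) : ℝ × ℝ) ((y t, t) : ℝ × ℝ) < δ₁ := by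
        rw [Prod.dist_eq]
        refine max_lt ?_ ?_
        · simpa [Real.dist_eq] using hXσ
        · rw [Real.dist_eq]
          calc |σ - t| ≤ |s - t| := habs
            _ < δ := hst
            _ ≤ δ₁ := by linarith
      have := hδ₁ hmemP hdist
      rw [Real.dist_eq] at this
      exact this.le
    -- upper bound on y s
    have hub : y s ≤ y t + ((s - t) * L + (ε / 2) * |s - t|) := by
      refine csSup_le (hne s) ?_
      rintro z ⟨α, hα, rfl⟩
      by_cases hcl : y t - δ₁ / 2 ≤ X α t
      · have h1 := (abs_le.1 (hnear α hα hcl)).2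
        have h2 : X α t ≤ y t := le_csSup (hbdd t ht) ⟨α, hα, rfl⟩
        linarith
      · push_neg at hcl
        have h1 := (abs_le.1 (hlip α hα t ht s hs)).2
        have h3 : -((s - t) * L) ≤ C * |s - t| := by
          calc -((s - t) * L) ≤ |(s - t) * L| := neg_le_abs _
            _ = |s - t| * |L| := abs_mul _ _
            _ ≤ |s - t| * C := mul_le_mul_of_nonneg_left hLC (abs_nonneg _)
            _ = C * |s - t| := mul_comm _ _
        have h4 : 0 ≤ (ε / 2) * |s - t| := by positivity
        linarith
    -- lower bound on y s
    have hlb : y t + ((s - t) * L - (ε / 2) * |s - t|) ≤ y s := by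
      refine le_of_forall_sub_le ?_
      intro δ' hδ'
      set d : ℝ := min δ' (δ₁ / 2) with hd
      have hdpos : 0 < d := lt_min hδ' (by linarith)
      obtain ⟨z, ⟨α, hα, rfl⟩, hz⟩ :=
        exists_lt_of_lt_csSup (hne t) (by linarith : y t - d < y t)
      have hclose : y t - δ₁ / 2 ≤ X α t := by
        have : d ≤ δ₁ / 2 := min_le_right _ _
        linarith
      have h1 := (abs_le.1 (hnear α hα hclose)).1
      have h2 : X α s ≤ y s := le_csSup (hbdd s hs) ⟨α, hα, rfl⟩
      have h3 : d ≤ δ' := min_le_left _ _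
      linarith
    exact abs_le.2 ⟨by linarith, by linarith⟩
  refine ⟨δ, hδpos, ?_⟩
  intro s hs hdist
  rw [Real.dist_eq] at hdist
  have hsIcc : s ∈ Set.Icc (0:ℝ) T := hs.1
  have hsne : s ≠ t := by
    intro h
    exact hs.2 (by simp [h])
  have hne0 : s - t ≠ 0 := sub_ne_zero.2 hsne
  have habs0 : 0 < |s - t| := abs_pos.2 hne0
  have hm := main s hsIcc hdist
  rw [Real.dist_eq, slope_def_field]
  have heq : (y s - y t) / (s - t) - L = (y s - y t - (s - t) * L) / (s - t) := by
    field_simp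
  rw [heq, abs_div, div_lt_iff₀ habs0]
  calc |y s - y t - (s - t) * L| ≤ (ε / 2) * |s - t| := hm
    _ < ε * |s - t| := by nlinarith

/-- for a bounded continuous weak solution on `ℝ × [0,T]`, the pointwise
supremum (and infimum) of a nonempty family of characteristics with a common starting point
is again a characteristic. -/
theorem sup_inf_of_characteristics_is_characteristic
    (u₀ w₀ : ℝ → ℝ) (u w : ℝ → ℝ → ℝ) (T : ℝ) (hT : 0 < T)
    (hweak : IsWeakSolution u w u₀ w₀)
    (hbd : ∃ C : ℝ, ∀ x : ℝ, ∀ t ∈ Set.Icc (0:ℝ) T, |u x t| ≤ C)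
    (A : Set ℝ) (hA : A.Nonempty) (X : ℝ → ℝ → ℝ) (x₀ : ℝ)
    (hchar : ∀ α ∈ A, ∀ t ∈ Set.Icc (0:ℝ) T,
      HasDerivWithinAt (X α) (u (X α t) t) (Set.Icc 0 T) t)
    (hstart : ∀ α ∈ A, X α 0 = x₀) :
    (∀ t ∈ Set.Icc (0:ℝ) T,
      HasDerivWithinAt (fun s => sSup ((fun α => X α s) '' A))
        (u (sSup ((fun α => X α t) '' A)) t) (Set.Icc 0 T) t) ∧
    (∀ t ∈ Set.Icc (0:ℝ) T,
      HasDerivWithinAt (fun s => sInf ((fun α => X α s) '' A))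
        (u (sInf ((fun α => X α t) '' A)) t) (Set.Icc 0 T) t) := by
  obtain ⟨C, hC⟩ := hbd
  constructor
  · exact aux_sup_is_char u T hT hweak.cont C hC A hA X x₀ hchar hstart
  · -- reduce inf to sup by the reflection x ↦ -x
    set u' : ℝ → ℝ → ℝ := fun x t => -u (-x) t with hu'
    set X' : ℝ → ℝ → ℝ := fun α s => -X α s with hX'
    have hcont' : ContinuousOn (fun p : ℝ × ℝ => u' p.1 p.2)
        (Set.univ ×ˢ Set.Ici (0:ℝ)) := by
      have hm : Continuous (fun p : ℝ × ℝ => ((-p.1, p.2) : ℝ × ℝ)) :=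
        (continuous_fst.neg).prodMk continuous_snd
      have : ContinuousOn
          ((fun p : ℝ × ℝ => u p.1 p.2) ∘ (fun p : ℝ × ℝ => ((-p.1, p.2) : ℝ × ℝ)))
          (Set.univ ×ˢ Set.Ici (0:ℝ)) := by
        refine hweak.cont.comp hm.continuousOn ?_
        intro p hp
        exact Set.mem_prod.2 ⟨Set.mem_univ _, (Set.mem_prod.1 hp).2⟩
      exact this.neg
    have hbd' : ∀ x : ℝ, ∀ t ∈ Set.Icc (0:ℝ) T, |u' x t| ≤ C := by
      intro x t ht
      simpa [hu', abs_neg] using hC (-x) t ht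
    have hchar' : ∀ α ∈ A, ∀ t ∈ Set.Icc (0:ℝ) T,
        HasDerivWithinAt (X' α) (u' (X' α t) t) (Set.Icc 0 T) t := by
      intro α hα t ht
      have := (hchar α hα t ht).neg
      simp only [hu', hX', neg_neg]
      exact this
    have hstart' : ∀ α ∈ A, X' α 0 = -x₀ := by
      intro α hα
      simp [hX', hstart α hα]
    have key := aux_sup_is_char u' T hT hcont' C hbd' A hA X' (-x₀) hchar' hstart'
    -- identify sSup of negated family with -sInf
    have hset : ∀ s : ℝ, (fun α => X' α s) '' A = -((fun α => X α s) '' A) := by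
      intro s
      ext z
      simp only [Set.mem_image, Set.mem_neg, hX']
      constructor
      · rintro ⟨α, hα, rfl⟩
        exact ⟨α, hα, by ring⟩
      · rintro ⟨α, hα, hz⟩
        exact ⟨α, hα, by linarith⟩
    have hsupneg : ∀ s : ℝ,
        sSup ((fun α => X' α s) '' A) = -sInf ((fun α => X α s) '' A) := by
      intro s
      rw [hset s, Real.sInf_def, neg_neg]
    intro t ht
    have h1 := key t ht
    have hfun : (fun s => sSup ((fun α => X' α s) '' A))
        = fun s => -sInf ((fun α => X α s) '' A) := funext hsupneg
    rw [hfun, hsupneg t] at h1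
    have h2 := h1.neg
    have hval : -(u' (-sInf ((fun α => X α t) '' A)) t)
        = u (sInf ((fun α => X α t) '' A)) t := by
      simp [hu']
    rw [hval] at h2
    have h3 : (fun s => sInf ((fun α => X α s) '' A))
        = -(fun s => -sInf ((fun α => X α s) '' A)) := by
      funext s
      simp
    rw [h3]
    exact h2

end HunterSaxton
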